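/- arXiv:1310.3191 — 3 statements merged into one kernel-verified Lean document; each statement's English description precedes it below -/
import Mathlib

section
/- Let $R$ be a commutative associative ring (over $\mathbb{Z}$) that is free as a $\mathbb{Z}$-module with basis $\{e_u\}_{u\in I}$, with structure constants $e_u\cdot e_v=\sum_w c_{u,v}^w e_w$. Suppose $\gamma\colon I\to \mathbb{Z}^S$ is a function (for a finite set $S$) such that whenever $c_{u,v}^w\neq 0$ one has $\gamma(w)-\gamma(u)-\gamma(v)\geq 0$ componentwise. Then the product on $R\otimes_{\mathbb{Z}}\mathbb{Z}[\tau_i]_{i\in S}$ defined by $e_u\odot_\tau e_v=\sum_w \tau^{\gamma(w)-\gamma(u)-\gamma(v)}c_{u,v}^w e_w$ is commutative and associative. -/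
/-!
Whenever both structure constants in `c_{u,v}^y c_{y,w}^x` are nonzero, the hypothesis on `γ`
makes both τ-exponents nonnegative, so they add without truncation to
`γ(x) - γ(u) - γ(v) - γ(w)`, which is independent of `y` and symmetric in `u, v, w`.
Each side of the deformed associativity identity is therefore this one power of τ times
the corresponding side of the undeformed identity.
-/

open Finset MvPolynomial

noncomputable section

/-- The structure constants of the deformed product `⊙_τ`:
`e_u ⊙_τ e_v = ∑_w τ^(γ(w) - γ(u) - γ(v)) c_{u,v}^w e_w`, as elements of
`ℤ[τ_i : i ∈ S]`. -/
def deformedConst {I S : Type*} [Fintype S]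
    (c : I → I → I → ℤ) (γ : I → S → ℤ) (u v w : I) : MvPolynomial S ℤ :=
  (∏ i, X i ^ (γ w i - γ u i - γ v i).toNat) * C (c u v w)

/-- `τ^a`, with negative exponents truncated to `0` as in `deformedConst`. -/
def tauPow {R S : Type*} [CommSemiring R] [Fintype S] (a : S → ℤ) : MvPolynomial S R :=
  ∏ i, X i ^ (a i).toNat

theorem tauPow_mul_tauPow {R S : Type*} [CommSemiring R] [Fintype S] {a b : S → ℤ}
    (ha : 0 ≤ a) (hb : 0 ≤ b) : (tauPow a * tauPow b : MvPolynomial S R) = tauPow (a + b) := by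
  simp only [tauPow, ← prod_mul_distrib, ← pow_add, Pi.add_apply, Int.toNat_add (ha _) (hb _)]

section DeformedConst

variable {I S : Type*} [Fintype S] {c : I → I → I → ℤ} {γ : I → S → ℤ}

theorem deformedConst_eq_tauPow (u v w : I) :
    deformedConst c γ u v w = tauPow (γ w - γ u - γ v) * C (c u v w) :=
  rfl

theorem deformedConst_comm (hcomm : ∀ u v w, c u v w = c v u w) (u v w : I) :
    deformedConst c γ u v w = deformedConst c γ v u w := by
  rw [deformedConst_eq_tauPow, deformedConst_eq_tauPow, hcomm, sub_right_comm]

theorem deformedConst_mul_deformedConst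
    (hγ : ∀ u v w, c u v w ≠ 0 → ∀ i, γ u i + γ v i ≤ γ w i) (u v w x y : I) :
    deformedConst c γ u v y * deformedConst c γ y w x
      = tauPow (γ x - γ u - γ v - γ w) * C (c u v y * c y w x) := by
  by_cases huv : c u v y = 0
  · simp [deformedConst_eq_tauPow, huv]
  by_cases hyw : c y w x = 0
  · simp [deformedConst_eq_tauPow, hyw]
  have h₁ : 0 ≤ γ y - γ u - γ v := fun i => by
    simp only [Pi.sub_apply, Pi.zero_apply]
    linarith [hγ u v y huv i]
  have h₂ : 0 ≤ γ x - γ y - γ w := fun i => by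
    simp only [Pi.sub_apply, Pi.zero_apply]
    linarith [hγ y w x hyw i]
  rw [deformedConst_eq_tauPow, deformedConst_eq_tauPow, mul_mul_mul_comm,
    tauPow_mul_tauPow h₁ h₂, map_mul]
  congr 2
  abel

end DeformedConst

/-- If `R` is a commutative associative ring, free over `ℤ` with basis
`{e_u}_{u ∈ I}` and structure constants `c_{u,v}^w`, and `γ : I → ℤ^S` satisfies
`γ(w) - γ(u) - γ(v) ≥ 0` whenever `c_{u,v}^w ≠ 0`, then the product `⊙_τ` on
`R ⊗ ℤ[τ]` defined by `e_u ⊙_τ e_v = ∑_w τ^(γ(w)-γ(u)-γ(v)) c_{u,v}^w e_w` is commutative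
and associative (equivalently, its structure constants satisfy the commutativity and
associativity identities). -/
theorem deformed_product_comm_assoc {I S : Type*} [Fintype I] [Fintype S]
    (c : I → I → I → ℤ)
    (hcomm : ∀ u v w, c u v w = c v u w)
    (hassoc : ∀ u v w x, ∑ y, c u v y * c y w x = ∑ y, c v w y * c u y x)
    (γ : I → S → ℤ)
    (hγ : ∀ u v w, c u v w ≠ 0 → ∀ i, γ u i + γ v i ≤ γ w i) :
    (∀ u v w, deformedConst c γ u v w = deformedConst c γ v u w) ∧
    (∀ u v w x, ∑ y, deformedConst c γ u v y * deformedConst c γ y w x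
        = ∑ y, deformedConst c γ v w y * deformedConst c γ u y x) := by
  refine ⟨deformedConst_comm hcomm, fun u v w x : I => ?_⟩
  calc ∑ y, deformedConst c γ u v y * deformedConst c γ y w x
      = tauPow (γ x - γ u - γ v - γ w) * C (∑ y, c u v y * c y w x) := by
        simp only [deformedConst_mul_deformedConst hγ, map_sum, mul_sum]
    _ = tauPow (γ x - γ v - γ w - γ u) * C (∑ y, c v w y * c y u x) := by
        simp only [hassoc, hcomm u]
        congr 2
        abel
    _ = ∑ y, deformedConst c γ v w y * deformedConst c γ u y x := by
        simp only [deformedConst_comm hcomm u, deformedConst_mul_deformedConst hγ, map_sum,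
          mul_sum]
end
end

section
/- In the setting of the deformed product $\odot_\tau$ above, specializing all variables $\tau_i$ to $0$ yields a well-defined commutative associative product $e_u\odot_0 e_v=\sum'_w c_{u,v}^w e_w$, where the sum runs only over those $w$ with $\gamma(w)=\gamma(u)+\gamma(v)$; moreover this product is graded with respect to the $\mathbb{Z}^S$-grading given by $\gamma$. -/
/-!
Every nonzero term `c_{u,v}^y c_{y,w}^x` of `(e_u e_v) e_w` satisfies `γ u + γ v ≤ γ y` and `γ y + γ w ≤ γ x`; both are equalities exactly
when `γ x = γ u + γ v + γ w`. So both bracketings of `e_u ⊙_0 e_v ⊙_0 e_w` are those of the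
original product cut down to the single degree `γ u + γ v + γ w` (the second one after using
commutativity), and they agree because the original ones do.
-/

open Finset

noncomputable section

/-- The structure constants of the specialization `⊙_0` at `τ = 0` of the deformed product:
`e_u ⊙_0 e_v = ∑'_w c_{u,v}^w e_w`, the sum running over `w` with `γ(w) = γ(u) + γ(v)`. -/
def zeroConst {I S : Type*} [Fintype S] [DecidableEq S]
    (c : I → I → I → ℤ) (γ : I → S → ℤ) (u v w : I) : ℤ :=
  if γ w = γ u + γ v then c u v w else 0

theorem eq_and_eq_add_iff_of_le {α : Type*} [AddCommMonoid α] [PartialOrder α]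
    [IsOrderedCancelAddMonoid α] {a y w x : α} (hay : a ≤ y) (hyx : y + w ≤ x) :
    y = a ∧ x = y + w ↔ x = a + w := by
  constructor
  · rintro ⟨rfl, rfl⟩
    rfl
  · intro hx
    have hy : y = a :=
      le_antisymm (le_of_add_le_add_right (hx ▸ hyx : y + w ≤ a + w)) hay
    exact ⟨hy, hy ▸ hx⟩

section ZeroConst

variable {I S : Type*} [Fintype S] [DecidableEq S] {c : I → I → I → ℤ} {γ : I → S → ℤ}

theorem zeroConst_comm (hcomm : ∀ u v w, c u v w = c v u w) (u v w : I) :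
    zeroConst c γ u v w = zeroConst c γ v u w := by
  simp only [zeroConst, hcomm u v w, add_comm (γ u)]

theorem eq_add_of_zeroConst_ne_zero {u v w : I} (h : zeroConst c γ u v w ≠ 0) :
    γ w = γ u + γ v := by
  by_contra hne
  exact h (if_neg hne)

theorem zeroConst_mul_zeroConst (hγ : ∀ u v w, c u v w ≠ 0 → γ u + γ v ≤ γ w)
    (u v w x y : I) :
    zeroConst c γ u v y * zeroConst c γ y w x
      = if γ x = γ u + γ v + γ w then c u v y * c y w x else 0 := by
  by_cases huv : c u v y = 0
  · simp [zeroConst, huv]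
  by_cases hyw : c y w x = 0
  · simp [zeroConst, hyw]
  have hdeg := eq_and_eq_add_iff_of_le (hγ u v y huv) (hγ y w x hyw)
  simp only [zeroConst, ← hdeg, ite_mul, mul_ite, zero_mul, mul_zero, ite_and]
  split_ifs <;> rfl

variable [Fintype I]

theorem sum_zeroConst_mul_zeroConst
    (hγ : ∀ u v w, c u v w ≠ 0 → γ u + γ v ≤ γ w) (u v w x : I) :
    ∑ y, zeroConst c γ u v y * zeroConst c γ y w x
      = if γ x = γ u + γ v + γ w then ∑ y, c u v y * c y w x else 0 := by
  simp only [zeroConst_mul_zeroConst hγ, ite_sum_zero]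

end ZeroConst

/-- Setting all `τ_i = 0` in the deformed product `⊙_τ` yields a
well-defined commutative associative product `e_u ⊙_0 e_v = ∑'_w c_{u,v}^w e_w` (sum over
`w` with `γ(w) = γ(u) + γ(v)`); moreover it is graded for the `ℤ^S`-grading given by `γ`:
nonzero structure constants only occur when `γ(w) = γ(u) + γ(v)`. -/
theorem zero_specialization_comm_assoc_graded {I S : Type*} [Fintype I] [Fintype S]
    [DecidableEq S]
    (c : I → I → I → ℤ)
    (hcomm : ∀ u v w, c u v w = c v u w)
    (hassoc : ∀ u v w x, ∑ y, c u v y * c y w x = ∑ y, c v w y * c u y x)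
    (γ : I → S → ℤ)
    (hγ : ∀ u v w, c u v w ≠ 0 → ∀ i, γ u i + γ v i ≤ γ w i) :
    (∀ u v w, zeroConst c γ u v w = zeroConst c γ v u w) ∧
    (∀ u v w x, ∑ y, zeroConst c γ u v y * zeroConst c γ y w x
        = ∑ y, zeroConst c γ v w y * zeroConst c γ u y x) ∧
    (∀ u v w, zeroConst c γ u v w ≠ 0 → γ w = γ u + γ v) := by
  refine ⟨zeroConst_comm hcomm, fun u v w x => ?_, fun _ _ _ => eq_add_of_zeroConst_ne_zero⟩
  calc ∑ y, zeroConst c γ u v y * zeroConst c γ y w x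
      = if γ x = γ u + γ v + γ w then ∑ y, c u v y * c y w x else 0 :=
        sum_zeroConst_mul_zeroConst hγ u v w x
    _ = if γ x = γ v + γ w + γ u then ∑ y, c v w y * c y u x else 0 := by
        simp only [hassoc u v w x, hcomm _ u, add_rotate (γ u)]
    _ = ∑ y, zeroConst c γ v w y * zeroConst c γ u y x := by
        simp only [zeroConst_comm hcomm u, sum_zeroConst_mul_zeroConst hγ]
end
end

section
/- Let $V$ be a finite-dimensional representation of $\mathfrak{sl}_2(\mathbb{C})$ with standard basis $E,F,H$. If $v\in V$ satisfies $Hv=-m\,v$ for a positive integer $m$, then there exists $v'\in V$ with $v=F^m v'$. -/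
/-!
`F ^ k` maps the `k`-eigenspace of `H` to its `-k`-eigenspace, and `E ^ k` maps back (`(-H, F, E)`
is again an `sl₂` triple). Both maps are injective on these eigenspaces, so in finite dimension
they are bijections. For injectivity of `F ^ k` on the `k`-eigenspace, induct on the length of the
`E`-string through `u`: if `F ^ k u = 0` then `F ^ (k + 2) (E u) = 0` with `E u` of weight `k + 2`,
so `E u = 0`; thus `u` is primitive of weight `k`, and then `F ^ k u ≠ 0` unless `u = 0`.
-/

open LieModule Module Module.End Set

theorem LinearMap.bijOn_of_mapsTo_of_injOn {K V : Type*} [Field K] [AddCommGroup V] [Module K V]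
    [FiniteDimensional K V] {p q : Submodule K V} {g g' : V →ₗ[K] V}
    (hg : MapsTo g p q) (hg' : MapsTo g' q p) (hi : InjOn g p) (hi' : InjOn g' q) :
    BijOn g p q := by
  let φ : p →ₗ[K] q := g.restrict fun _ hx ↦ hg hx
  let ψ : q →ₗ[K] p := g'.restrict fun _ hx ↦ hg' hx
  have hφ : Function.Injective φ := fun x y hxy ↦
    Subtype.ext (hi x.2 y.2 (congrArg Subtype.val hxy))
  have hψ : Function.Injective ψ := fun x y hxy ↦
    Subtype.ext (hi' x.2 y.2 (congrArg Subtype.val hxy))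
  have hrank : finrank K p = finrank K q :=
    (φ.finrank_le_finrank_of_injective hφ).antisymm (ψ.finrank_le_finrank_of_injective hψ)
  refine ⟨hg, hi, fun y hy ↦ ?_⟩
  obtain ⟨x, hx⟩ := (injective_iff_surjective_of_finrank_eq_finrank hrank).mp hφ ⟨y, hy⟩
  exact ⟨x, x.2, congrArg Subtype.val hx⟩

namespace IsSl2Triple

section CommRing

variable {R L M : Type*} [CommRing R] [LieRing L] [LieAlgebra R L]
  [AddCommGroup M] [Module R M] [LieRingModule L M] [LieModule R L M]
  {h e f : L} {m : M} {μ : R}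

lemma lie_h_pow_toEnd_f_of_lie_h (t : IsSl2Triple h e f) (hm : ⁅h, m⁆ = μ • m) (n : ℕ) :
    ⁅h, (toEnd R L M f ^ n) m⁆ = (μ - 2 * n) • (toEnd R L M f ^ n) m := by
  have := t.symm.lie_h_pow_toEnd_e (m := m) (μ := -μ) (by rw [neg_lie, hm, neg_smul]) n
  rw [neg_lie, neg_eq_iff_eq_neg, ← neg_smul] at this
  rw [this]
  congr 1
  ring

lemma lie_e_pow_succ_toEnd_f_of_lie_h (t : IsSl2Triple h e f) (hm : ⁅h, m⁆ = μ • m) (n : ℕ) :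
    ⁅e, (toEnd R L M f ^ (n + 1)) m⁆ =
      (toEnd R L M f ^ (n + 1)) ⁅e, m⁆ + ((n + 1) * (μ - n)) • (toEnd R L M f ^ n) m := by
  induction n with
  | zero => simp [leibniz_lie e f m, t.lie_e_f, hm, add_comm]
  | succ n ih =>
    have hf (x : M) (k : ℕ) : (toEnd R L M f ^ (k + 1)) x = ⁅f, (toEnd R L M f ^ k) x⁆ := by
      rw [pow_succ', Module.End.mul_apply, toEnd_apply_apply]
    rw [hf, hf _ (n + 1), leibniz_lie e, t.lie_e_f, t.lie_h_pow_toEnd_f_of_lie_h hm, ih, lie_add,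
      lie_smul, ← hf, ← hf]
    push_cast
    module

end CommRing

section Field

variable {K L M : Type*} [Field K] [CharZero K] [LieRing L] [LieAlgebra K L]
  [AddCommGroup M] [Module K M] [LieRingModule L M] [LieModule K L M] [FiniteDimensional K M]
  {h e f : L} {m : M} {μ : K}

lemma exists_pow_toEnd_e_eq_zero (t : IsSl2Triple h e f) (hm : ⁅h, m⁆ = μ • m) :
    ∃ N : ℕ, (toEnd K L M e ^ N) m = 0 := by
  by_contra! hne
  have hev (n : ℕ) : (toEnd K L M h).HasEigenvalue (μ + 2 * n) :=
    hasEigenvalue_of_hasEigenvector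
      ⟨mem_eigenspace_iff.mpr (t.lie_h_pow_toEnd_e hm n), hne n⟩
  exact infinite_of_injective_forall_mem (fun a b hab ↦ by simpa using hab) hev
    (finite_hasEigenvalue _)

lemma eq_zero_of_pow_toEnd_f_eq_zero (t : IsSl2Triple h e f) {k : ℕ} (hm : ⁅h, m⁆ = (k : K) • m)
    (hf : (toEnd K L M f ^ k) m = 0) : m = 0 := by
  obtain ⟨N, hN⟩ := t.exists_pow_toEnd_e_eq_zero hm
  induction N generalizing k m with
  | zero => simpa using hN
  | succ N ih =>
    have he : ⁅e, m⁆ = 0 := by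
      refine ih (k := k + 2) ?_ ?_ ?_
      · simpa using t.lie_h_pow_toEnd_e hm 1
      · have hsucc {j : ℕ} (hj : (toEnd K L M f ^ j) m = 0) : (toEnd K L M f ^ (j + 1)) m = 0 := by
          rw [pow_succ', Module.End.mul_apply, hj, map_zero]
        have := t.lie_e_pow_succ_toEnd_f_of_lie_h hm (k + 1)
        rwa [hsucc (hsucc hf), hsucc hf, lie_zero, smul_zero, add_zero, eq_comm] at this
      · rwa [pow_succ, Module.End.mul_apply] at hN
    by_contra hm0
    exact HasPrimitiveVectorWith.pow_toEnd_f_ne_zero_of_eq_nat (t := t) ⟨hm0, hm, he⟩ rfl le_rfl hf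

lemma injOn_pow_toEnd_f_eigenspace (t : IsSl2Triple h e f) (k : ℕ) :
    InjOn (toEnd K L M f ^ k) (eigenspace (toEnd K L M h) k) := by
  intro x hx y hy hxy
  rw [← sub_eq_zero]
  exact t.eq_zero_of_pow_toEnd_f_eq_zero (mem_eigenspace_iff.mp (sub_mem hx hy))
    (by rw [map_sub, hxy, sub_self])

lemma injOn_pow_toEnd_e_eigenspace (t : IsSl2Triple h e f) (k : ℕ) :
    InjOn (toEnd K L M e ^ k) (eigenspace (toEnd K L M h) (-k)) := by
  have heig : eigenspace (toEnd K L M (-h)) k = eigenspace (toEnd K L M h) (-k) := by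
    ext x
    simp [neg_eq_iff_eq_neg]
  simpa [← heig] using t.symm.injOn_pow_toEnd_f_eigenspace k

theorem bijOn_pow_toEnd_f_eigenspace (t : IsSl2Triple h e f) (k : ℕ) :
    BijOn (toEnd K L M f ^ k) (eigenspace (toEnd K L M h) k)
      (eigenspace (toEnd K L M h) (-k)) := by
  refine LinearMap.bijOn_of_mapsTo_of_injOn (g' := toEnd K L M e ^ k) (fun x hx ↦ ?_)
    (fun x hx ↦ ?_) (t.injOn_pow_toEnd_f_eigenspace k) (t.injOn_pow_toEnd_e_eigenspace k)
  · rw [SetLike.mem_coe, mem_eigenspace_iff, toEnd_apply_apply,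
      t.lie_h_pow_toEnd_f_of_lie_h (mem_eigenspace_iff.mp hx)]
    congr 1
    ring
  · rw [SetLike.mem_coe, mem_eigenspace_iff, toEnd_apply_apply,
      t.lie_h_pow_toEnd_e (mem_eigenspace_iff.mp hx)]
    congr 1
    ring

end Field

end IsSl2Triple

/-- Let `V` be a finite-dimensional representation of `𝔰𝔩₂(ℂ)`, given by
endomorphisms `E, F, H` with `[H,E] = 2E`, `[H,F] = -2F`, `[E,F] = H`. If `H v = -m v`
for a positive integer `m`, then `v = F^m v'` for some `v' ∈ V`. -/
theorem sl2_negative_weight_in_image_of_F_pow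
    {V : Type*} [AddCommGroup V] [Module ℂ V] [FiniteDimensional ℂ V]
    (E F H : Module.End ℂ V)
    (hHE : H * E - E * H = (2 : ℂ) • E)
    (hHF : H * F - F * H = (-2 : ℂ) • F)
    (hEF : E * F - F * E = H)
    (m : ℕ) (hm : 0 < m) (v : V) (hv : H v = (-(m : ℂ)) • v) :
    ∃ v' : V, v = (F ^ m) v' := by
  let := LieRing.ofAssociativeRing (A := Module.End ℂ V)
  rcases eq_or_ne v 0 with rfl | hv0
  · exact ⟨0, by simp⟩
  have t : IsSl2Triple H E F :=
    { h_ne_zero := by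
        rintro rfl
        simp [hm.ne', hv0] at hv
      lie_e_f := by rw [Ring.lie_def, hEF]
      lie_h_e_nsmul := by rw [Ring.lie_def, hHE, ofNat_smul_eq_nsmul]
      lie_h_f_nsmul := by rw [Ring.lie_def, hHF, neg_smul, ofNat_smul_eq_nsmul] }
  obtain ⟨u, -, hu⟩ := (t.bijOn_pow_toEnd_f_eigenspace m).surjOn
    (show v ∈ eigenspace (toEnd ℂ (Module.End ℂ V) V H) (-m) by simpa using hv)
  exact ⟨u, by simpa using hu.symm⟩
end
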